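/- arXiv:2601.19414 — 2 statements merged into one kernel-verified Lean document; each statement's English description precedes it below -/
import Mathlib

section
/- Let d ≥ 2, let T be the d-adic rooted tree, and let 1 ≠ H ⊴ G ≤ Aut T be self-similar subgroups with H fractal. Then the subgroup G_H := {g ∈ G : (g|_v)(g|_w)^{-1} ∈ H for all vertices v, w of T} is fractal. -/
/-!
Common framework: automorphisms of the `d`-adic rooted tree.

Vertices of the `d`-adic rooted tree `T` are finite words over the alphabet `Fin d`
(the root is the empty word `[]`, and the immediate descendants of `v` are the words
`v ++ [i]`).  An automorphism of `T` is a permutation of the vertex set preserving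
the length (= level) of words and the prefix (= ancestor) relation.
-/

namespace ArboGal

/-- An automorphism of the `d`-adic rooted tree. -/
structure TreeAut (d : ℕ) where
  toPerm : Equiv.Perm (List (Fin d))
  length_eq : ∀ v, (toPerm v).length = v.length
  prefix_mono : ∀ v w, v <+: w → toPerm v <+: toPerm w

namespace TreeAut

variable {d : ℕ}

lemma toPerm_injective : Function.Injective (toPerm : TreeAut d → Equiv.Perm (List (Fin d))) := by
  rintro ⟨a, _, _⟩ ⟨b, _, _⟩ h
  simpa using h

lemma symm_length (g : TreeAut d) (v : List (Fin d)) :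
    (g.toPerm.symm v).length = v.length := by
  conv_rhs => rw [← Equiv.apply_symm_apply g.toPerm v, g.length_eq]

lemma symm_prefix (g : TreeAut d) {v w : List (Fin d)} (h : v <+: w) :
    g.toPerm.symm v <+: g.toPerm.symm w := by
  set p := (g.toPerm.symm w).take v.length with hp
  have hpw : p <+: g.toPerm.symm w := List.take_prefix _ _
  have h1 : g.toPerm p <+: w := by
    have h2 := g.prefix_mono _ _ hpw
    rwa [Equiv.apply_symm_apply] at h2
  have hvlen : v.length ≤ w.length := h.length_le
  have hplen : (g.toPerm p).length = v.length := by
    rw [g.length_eq, hp, List.length_take, symm_length]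
    omega
  have hgpv : g.toPerm p = v := by
    have e1 := List.prefix_iff_eq_take.mp h1
    have e2 := List.prefix_iff_eq_take.mp h
    rw [hplen] at e1
    rw [e1, ← e2]
  have hfin : p = g.toPerm.symm v := by
    rw [← hgpv, Equiv.symm_apply_apply]
  rw [← hfin]
  exact hpw

instance : Group (TreeAut d) where
  one := ⟨Equiv.refl _, fun _ => rfl, fun _ _ h => h⟩
  mul g h := ⟨g.toPerm.trans h.toPerm,
    fun v => by simp [Equiv.trans_apply, h.length_eq, g.length_eq],
    fun v w hvw => h.prefix_mono _ _ (g.prefix_mono _ _ hvw)⟩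
  inv g := ⟨g.toPerm.symm, g.symm_length, fun _ _ h => g.symm_prefix h⟩
  mul_assoc a b c := toPerm_injective rfl
  one_mul a := toPerm_injective (Equiv.ext fun _ => rfl)
  mul_one a := toPerm_injective (Equiv.ext fun _ => rfl)
  inv_mul_cancel a := toPerm_injective (Equiv.symm_trans_self a.toPerm)

@[simp] lemma mul_toPerm (g h : TreeAut d) : (g * h).toPerm = g.toPerm.trans h.toPerm := rfl
@[simp] lemma one_toPerm : (1 : TreeAut d).toPerm = Equiv.refl _ := rfl
@[simp] lemma inv_toPerm (g : TreeAut d) : (g⁻¹).toPerm = g.toPerm.symm := rfl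

lemma apply_append (g : TreeAut d) (v w : List (Fin d)) :
    g.toPerm (v ++ w) = g.toPerm v ++ (g.toPerm (v ++ w)).drop v.length := by
  obtain ⟨s, hs⟩ := g.prefix_mono v (v ++ w) (List.prefix_append v w)
  rw [← hs]
  congr 1
  rw [← g.length_eq v]
  exact List.drop_left.symm

/-- The section `g|_v` of `g` at the vertex `v` : the unique automorphism of `T` with
`(v ++ w)^g = v^g ++ w^(g|_v)` for all words `w`. -/
def sect (g : TreeAut d) (v : List (Fin d)) : TreeAut d where
  toPerm :=
    { toFun := fun w => (g.toPerm (v ++ w)).drop v.length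
      invFun := fun w => (g.toPerm.symm (g.toPerm v ++ w)).drop v.length
      left_inv := by
        intro w
        show (g.toPerm.symm (g.toPerm v ++ (g.toPerm (v ++ w)).drop v.length)).drop v.length = w
        rw [← apply_append g v w, Equiv.symm_apply_apply, List.drop_left]
      right_inv := by
        intro w
        set u := g.toPerm.symm (g.toPerm v ++ w) with hu
        have hvu : v <+: u := by
          have h2 : g.toPerm.symm (g.toPerm v) <+: u := g.symm_prefix (List.prefix_append _ _)
          rwa [Equiv.symm_apply_apply] at h2
        have hrecon : v ++ u.drop v.length = u := by
          obtain ⟨s, hs⟩ := hvu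
          rw [← hs, List.drop_left]
        show (g.toPerm (v ++ u.drop v.length)).drop v.length = w
        rw [hrecon, hu, Equiv.apply_symm_apply, ← g.length_eq v, List.drop_left] }
  length_eq := fun w => by
    show ((g.toPerm (v ++ w)).drop v.length).length = w.length
    rw [List.length_drop, g.length_eq, List.length_append]
    omega
  prefix_mono := by
    intro w₁ w₂ h
    have h2 : g.toPerm (v ++ w₁) <+: g.toPerm (v ++ w₂) := by
      apply g.prefix_mono
      obtain ⟨s, rfl⟩ := h
      rw [← List.append_assoc]
      exact List.prefix_append _ _
    show (g.toPerm (v ++ w₁)).drop v.length <+: (g.toPerm (v ++ w₂)).drop v.length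
    rw [apply_append g v w₁, apply_append g v w₂] at h2
    exact (List.prefix_append_right_inj _).mp h2

@[simp] lemma sect_apply (g : TreeAut d) (v w : List (Fin d)) :
    (sect g v).toPerm w = (g.toPerm (v ++ w)).drop v.length := rfl

lemma concat_of_prefix_succ {α : Type*} {l₁ l₂ : List α} (h : l₁ <+: l₂)
    (hl : l₂.length = l₁.length + 1) (x : α) : l₂ = l₁ ++ [l₂.getLastD x] := by
  obtain ⟨s, rfl⟩ := h
  have hs : s.length = 1 := by
    rw [List.length_append] at hl
    omega
  obtain ⟨a, rfl⟩ := List.length_eq_one_iff.mp hs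
  rw [List.getLastD_concat]

lemma apply_child (g : TreeAut d) (v : List (Fin d)) (i : Fin d) :
    g.toPerm (v ++ [i]) = g.toPerm v ++ [(g.toPerm (v ++ [i])).getLastD i] := by
  apply concat_of_prefix_succ (g.prefix_mono v _ (List.prefix_append _ _))
  rw [g.length_eq, g.length_eq, List.length_append, List.length_singleton]

/-- The label `g|_v^1` of `g` at the vertex `v`, i.e. the permutation induced by `g` on the
immediate descendants of `v` (identified with `Fin d`): `(v ++ [i])^g = v^g ++ [(label g v) i]`. -/
def label (g : TreeAut d) (v : List (Fin d)) : Equiv.Perm (Fin d) where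
  toFun i := (g.toPerm (v ++ [i])).getLastD i
  invFun j := (g.toPerm.symm (g.toPerm v ++ [j])).getLastD j
  left_inv := by
    intro i
    show (g.toPerm.symm (g.toPerm v ++ [(g.toPerm (v ++ [i])).getLastD i])).getLastD _ = i
    rw [← apply_child, Equiv.symm_apply_apply, List.getLastD_concat]
  right_inv := by
    intro j
    set u := g.toPerm.symm (g.toPerm v ++ [j]) with hu
    have hvu : v <+: u := by
      have h2 : g.toPerm.symm (g.toPerm v) <+: u := g.symm_prefix (List.prefix_append _ _)
      rwa [Equiv.symm_apply_apply] at h2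
    have hlen : u.length = v.length + 1 := by
      rw [hu, symm_length, List.length_append, g.length_eq, List.length_singleton]
    have h3 : u = v ++ [u.getLastD j] := concat_of_prefix_succ hvu hlen j
    show (g.toPerm (v ++ [u.getLastD j])).getLastD (u.getLastD j) = j
    rw [← h3, hu, Equiv.apply_symm_apply, List.getLastD_concat]

lemma label_apply (g : TreeAut d) (v : List (Fin d)) (i : Fin d) :
    label g v i = (g.toPerm (v ++ [i])).getLastD i := rfl

lemma apply_concat (g : TreeAut d) (v : List (Fin d)) (i : Fin d) :
    g.toPerm (v ++ [i]) = g.toPerm v ++ [label g v i] := apply_child g v i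

end TreeAut

open TreeAut

/-! ### Portraits

Every assignment of a permutation of `Fin d` (a "label") to each vertex determines a unique
automorphism of the `d`-adic tree; this is used to construct explicit automorphisms. -/

/-- Auxiliary function for `ofPortrait`. -/
def pf (c : List (Fin d) → Equiv.Perm (Fin d)) : List (Fin d) → List (Fin d) → List (Fin d)
  | _, [] => []
  | v, i :: w => c v i :: pf c (v ++ [i]) w

/-- Auxiliary inverse function for `ofPortrait`. -/
def pfInv (c : List (Fin d) → Equiv.Perm (Fin d)) : List (Fin d) → List (Fin d) → List (Fin d)
  | _, [] => []
  | v, j :: w => (c v)⁻¹ j :: pfInv c (v ++ [(c v)⁻¹ j]) w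

lemma pf_leftInv (c : List (Fin d) → Equiv.Perm (Fin d)) :
    ∀ (w v : List (Fin d)), pfInv c v (pf c v w) = w := by
  intro w
  induction w with
  | nil => intro v; rfl
  | cons i w ih =>
      intro v
      show (c v)⁻¹ (c v i) :: pfInv c (v ++ [(c v)⁻¹ (c v i)]) (pf c (v ++ [i]) w) = i :: w
      rw [show (c v)⁻¹ (c v i) = i from (c v).symm_apply_apply i, ih]

lemma pf_rightInv (c : List (Fin d) → Equiv.Perm (Fin d)) :
    ∀ (w v : List (Fin d)), pf c v (pfInv c v w) = w := by
  intro w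
  induction w with
  | nil => intro v; rfl
  | cons j w ih =>
      intro v
      show c v ((c v)⁻¹ j) :: pf c (v ++ [(c v)⁻¹ j]) (pfInv c (v ++ [(c v)⁻¹ j]) w) = j :: w
      rw [show c v ((c v)⁻¹ j) = j from (c v).apply_symm_apply j, ih]

lemma pf_length (c : List (Fin d) → Equiv.Perm (Fin d)) :
    ∀ (w v : List (Fin d)), (pf c v w).length = w.length := by
  intro w
  induction w with
  | nil => intro v; rfl
  | cons i w ih =>
      intro v
      show (c v i :: pf c (v ++ [i]) w).length = w.length + 1
      rw [List.length_cons, ih]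

lemma pf_append (c : List (Fin d) → Equiv.Perm (Fin d)) :
    ∀ (a b v : List (Fin d)), pf c v (a ++ b) = pf c v a ++ pf c (v ++ a) b := by
  intro a
  induction a with
  | nil => intro b v; simp [pf]
  | cons i a ih =>
      intro b v
      show c v i :: pf c (v ++ [i]) (a ++ b) = (c v i :: pf c (v ++ [i]) a) ++ pf c (v ++ i :: a) b
      rw [ih, List.cons_append, ← List.append_cons]

/-- The automorphism of the `d`-adic tree whose label at each vertex `v` is `c v`. -/
def ofPortrait (c : List (Fin d) → Equiv.Perm (Fin d)) : TreeAut d where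
  toPerm := ⟨pf c [], pfInv c [], fun w => pf_leftInv c w [], fun w => pf_rightInv c w []⟩
  length_eq := fun v => pf_length c v []
  prefix_mono := by
    intro v w h
    obtain ⟨s, rfl⟩ := h
    change pf c [] v <+: pf c [] (v ++ s)
    rw [pf_append]
    exact ⟨pf c ([] ++ v) s, rfl⟩

lemma ofPortrait_label (c : List (Fin d) → Equiv.Perm (Fin d)) (v : List (Fin d)) :
    label (ofPortrait c) v = c v := by
  apply Equiv.ext
  intro i
  show ((ofPortrait c).toPerm (v ++ [i])).getLastD i = (c v) i
  have h1 : (ofPortrait c).toPerm (v ++ [i]) = pf c [] (v ++ [i]) := rfl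
  rw [h1, pf_append]
  have h2 : pf c ([] ++ v) [i] = [c v i] := by simp [pf]
  rw [h2, List.getLastD_concat]


open TreeAut

section Predicates

variable {d : ℕ}

/-- A set of tree automorphisms is *self-similar* if it is closed under taking sections. -/
def SelfSimilarS (S : Set (TreeAut d)) : Prop :=
  ∀ g ∈ S, ∀ v : List (Fin d), sect g v ∈ S

/-- A set of tree automorphisms is *level-transitive* if it acts transitively on each
level of the tree. -/
def LevelTrans (S : Set (TreeAut d)) : Prop :=
  ∀ v w : List (Fin d), v.length = w.length → ∃ g ∈ S, g.toPerm v = w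

/-- `φ_v(st_S(v))`: the set of sections at `v` of the elements of `S` stabilizing `v`. -/
def vertexSections (S : Set (TreeAut d)) (v : List (Fin d)) : Set (TreeAut d) :=
  {x | ∃ g ∈ S, g.toPerm v = v ∧ sect g v = x}

/-- A set of tree automorphisms is *fractal* if it is self-similar, level-transitive and
`φ_v(st_S(v)) = S` for every vertex `v`. -/
def FractalS (S : Set (TreeAut d)) : Prop :=
  SelfSimilarS S ∧ LevelTrans S ∧ ∀ v : List (Fin d), vertexSections S v = S

/-- The intermediate group `G_H = {g ∈ G ∣ (g|_v)(g|_w)⁻¹ ∈ H for all vertices v, w}`. -/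
def GHset (G H : Set (TreeAut d)) : Set (TreeAut d) :=
  {g ∈ G | ∀ v w : List (Fin d), sect g v * (sect g w)⁻¹ ∈ H}

/-- Two automorphisms agree on all vertices of level at most `n`. -/
def agreeUpTo (n : ℕ) (g h : TreeAut d) : Prop :=
  ∀ v : List (Fin d), v.length ≤ n → g.toPerm v = h.toPerm v

/-- A set of tree automorphisms is *closed* (in the congruence = profinite topology of
`Aut T`) if it contains every automorphism that can be approximated up to every level by
elements of the set. -/
def CongrClosedS (S : Set (TreeAut d)) : Prop :=
  ∀ g : TreeAut d, (∀ n : ℕ, ∃ h ∈ S, agreeUpTo n g h) → g ∈ S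

/-- The closure of a subgroup of `Aut T` in the congruence (profinite) topology. -/
def congrClosure (Γ : Subgroup (TreeAut d)) : Subgroup (TreeAut d) where
  carrier := {g | ∀ n : ℕ, ∃ h ∈ Γ, agreeUpTo n g h}
  one_mem' := fun n => ⟨1, Γ.one_mem, fun _ _ => rfl⟩
  mul_mem' := by
    intro a b ha hb n
    obtain ⟨x, hx, hax⟩ := ha n
    obtain ⟨y, hy, hby⟩ := hb n
    refine ⟨x * y, Γ.mul_mem hx hy, fun v hv => ?_⟩
    show b.toPerm (a.toPerm v) = y.toPerm (x.toPerm v)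
    rw [hax v hv]
    exact hby _ (by rw [x.length_eq]; exact hv)
  inv_mem' := by
    intro a ha n
    obtain ⟨x, hx, hax⟩ := ha n
    refine ⟨x⁻¹, Γ.inv_mem hx, fun v hv => ?_⟩
    show a.toPerm.symm v = x.toPerm.symm v
    apply a.toPerm.injective
    rw [Equiv.apply_symm_apply]
    rw [hax (x.toPerm.symm v) (by rw [x.symm_length]; exact hv)]
    exact (Equiv.apply_symm_apply _ _).symm

/-- The action `π_n(g)` of `g` on the `n`-th level of the tree. -/
def lmap (n : ℕ) (g : TreeAut d) :
    {v : List (Fin d) // v.length = n} → {v : List (Fin d) // v.length = n} :=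
  fun v => ⟨g.toPerm v.1, by rw [g.length_eq]; exact v.2⟩

/-- The image `π_n(S)` of a set of tree automorphisms on the `n`-th level of the tree.
(An automorphism of the truncated tree `T^n` is uniquely determined by its action on the
`n`-th level, so this faithfully encodes the action on `T^n`.) -/
def levelImage (n : ℕ) (S : Set (TreeAut d)) :
    Set ({v : List (Fin d) // v.length = n} → {v : List (Fin d) // v.length = n}) :=
  lmap n '' S

/-- The proportion of elements of `π_n(S)` fixing some vertex at level `n`. -/
noncomputable def fixRatio (S : Set (TreeAut d)) (n : ℕ) : ℝ :=
  (Set.ncard {q ∈ levelImage n S | ∃ v, q v = v} : ℝ) / (Set.ncard (levelImage n S) : ℝ)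

/-- The fixed-point proportion
`FPP(S) = lim_n #{g ∈ π_n(S) : g fixes a vertex at level n} / |π_n(S)|`. -/
noncomputable def FPP (S : Set (TreeAut d)) : ℝ :=
  Filter.limUnder Filter.atTop (fixRatio S)

/-- The fixed-point process: `Xfix n g` is the number of vertices at level `n` fixed by `g`. -/
noncomputable def Xfix (n : ℕ) (g : TreeAut d) : ℕ :=
  Set.ncard {v : List (Fin d) | v.length = n ∧ g.toPerm v = v}

/-- The Hausdorff dimension of a (closed) subgroup of `Aut T`,
`hdim(S) = liminf_n log|π_n(S)| / log|π_n(Aut T)|`. -/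
noncomputable def hdim (S : Set (TreeAut d)) : ℝ :=
  Filter.liminf
    (fun n => Real.log (Set.ncard (levelImage n S)) /
      Real.log (Set.ncard (levelImage n (Set.univ : Set (TreeAut d)))))
    Filter.atTop

/-- The Haar measure (in the ambient closed group `G`) of the closure of a subset `S ⊆ G`:
for a closed subgroup `G ≤ Aut T` with Haar probability measure `μ_G` and a subset `S`
whose defining condition is closed, `μ_G(S) = lim_n |π_n(S)|/|π_n(G)| = inf_n |π_n(S)|/|π_n(G)|`
(the sequence is non-increasing). -/
noncomputable def relDensity (G S : Set (TreeAut d)) : ℝ :=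
  ⨅ n : ℕ, (Set.ncard (levelImage n S) : ℝ) / (Set.ncard (levelImage n G) : ℝ)

/-- The rigid vertex stabilizer `rist_S(v)`: elements of `S` fixing every vertex that is not
a descendant of `v`. -/
def ristS (S : Set (TreeAut d)) (v : List (Fin d)) : Set (TreeAut d) :=
  {g ∈ S | ∀ w : List (Fin d), ¬ v <+: w → g.toPerm w = w}

/-- The rigid level stabilizer `Rist_S(n)`: the product of the rigid vertex stabilizers of the
vertices at level `n`.  (An automorphism belongs to this product iff it fixes all vertices up
to level `n` and, below each vertex `v` of level `n`, it agrees with some element of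
`rist_S(v)`.) -/
def RistProd (S : Set (TreeAut d)) (n : ℕ) : Set (TreeAut d) :=
  {g ∈ S | (∀ w : List (Fin d), w.length ≤ n → g.toPerm w = w) ∧
    ∀ v : List (Fin d), v.length = n → ∃ h ∈ ristS S v, sect h v = sect g v}

/-- `R` has finite index in `S`: finitely many right cosets of `R` cover `S`. -/
def FiniteIndexIn (R S : Set (TreeAut d)) : Prop :=
  ∃ T : Finset (TreeAut d), ∀ g ∈ S, ∃ t ∈ T, ∃ r ∈ R, g = r * t

/-- A set of tree automorphisms is *branch* if it is level-transitive and all its rigid level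
stabilizers have finite index in it. -/
def BranchS (S : Set (TreeAut d)) : Prop :=
  LevelTrans S ∧ ∀ n : ℕ, 1 ≤ n → FiniteIndexIn (RistProd S n) S

/-- A closed level-transitive group `S` is of *finite type of depth `D`* if
`S = {g ∈ Aut T ∣ g|_v^D ∈ π_D(S) for all vertices v}`, where `g|_v^D = π_D(g|_v)` is the
depth-`D` section of `g` at `v`. -/
def FiniteType (S : Set (TreeAut d)) (D : ℕ) : Prop :=
  S = {g : TreeAut d | ∀ v : List (Fin d), lmap D (sect g v) ∈ levelImage D S}

/-- The set of right cosets `{H·g : g ∈ S}` (so its cardinality is the index `|S : H|`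
when `H ≤ S` are groups). -/
def rightCosets (H S : Set (TreeAut d)) : Set (Set (TreeAut d)) :=
  {C | ∃ g ∈ S, C = {x | ∃ h ∈ H, x = h * g}}

/-- The set of cosets `{π_D(H)·π_D(g) : g ∈ S}` of `π_D(H)` in `π_D(S)`. -/
def lvlCosets (D : ℕ) (H S : Set (TreeAut d)) :
    Set (Set ({v : List (Fin d) // v.length = D} → {v : List (Fin d) // v.length = D})) :=
  {C | ∃ g ∈ S, C = {q | ∃ h ∈ H, q = lmap D (h * g)}}

/-- The label of `g` at the root: the action `π_1(g)` of `g` on the first level. -/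
def rootLabel (g : TreeAut d) : Equiv.Perm (Fin d) := label g []

/-- The action `π_1(S)` of a set of tree automorphisms on the first level. -/
def rootImage (S : Set (TreeAut d)) : Set (Equiv.Perm (Fin d)) := rootLabel '' S

/-- The set of cosets of `π_1(H)` in `π_1(S)`, i.e. the quotient `Q = π_1(S)/π_1(H)`. -/
def rootCosets (H S : Set (TreeAut d)) : Set (Set (Equiv.Perm (Fin d))) :=
  {C | ∃ a ∈ rootImage S, C = {x | ∃ b ∈ rootImage H, x = b * a}}

/-- The level-`n` vertex of the end (infinite rooted path) `γ`. -/
def pathPrefix (γ : ℕ → Fin d) (n : ℕ) : List (Fin d) :=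
  List.ofFn (fun k : Fin n => γ k)

end Predicates

section AuxGH

variable {d : ℕ}

lemma toPerm_nil (g : TreeAut d) : g.toPerm [] = [] :=
  List.length_eq_zero_iff.mp (g.length_eq [])

lemma sect_root (g : TreeAut d) : sect g [] = g := by
  apply toPerm_injective
  apply Equiv.ext
  intro w
  simp [sect_apply]

lemma sect_mul (g h : TreeAut d) (v : List (Fin d)) :
    sect (g * h) v = sect g v * sect h (g.toPerm v) := by
  apply toPerm_injective
  apply Equiv.ext
  intro w
  show (h.toPerm (g.toPerm (v ++ w))).drop v.length
      = (h.toPerm (g.toPerm v ++ (g.toPerm (v ++ w)).drop v.length)).drop (g.toPerm v).length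
  rw [← apply_append g v w, g.length_eq]

lemma sect_sect (g : TreeAut d) (u v : List (Fin d)) :
    sect (sect g u) v = sect g (u ++ v) := by
  apply toPerm_injective
  apply Equiv.ext
  intro w
  show ((g.toPerm (u ++ (v ++ w))).drop u.length).drop v.length
      = (g.toPerm ((u ++ v) ++ w)).drop (u ++ v).length
  rw [List.append_assoc, List.drop_drop, List.length_append, Nat.add_comm]

lemma GH_mul {G H : Subgroup (TreeAut d)}
    (hnormal : ∀ g ∈ G, ∀ h ∈ H, g⁻¹ * h * g ∈ H)
    (hssG : SelfSimilarS (G : Set (TreeAut d)))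
    {g k : TreeAut d} (hg : g ∈ GHset (G : Set (TreeAut d)) (H : Set (TreeAut d)))
    (hk : k ∈ GHset (G : Set (TreeAut d)) (H : Set (TreeAut d))) :
    g * k ∈ GHset (G : Set (TreeAut d)) (H : Set (TreeAut d)) := by
  refine ⟨G.mul_mem hg.1 hk.1, fun v w => ?_⟩
  rw [sect_mul, sect_mul]
  have h1 : sect k (g.toPerm v) * (sect k (g.toPerm w))⁻¹ ∈ H := hk.2 _ _
  have hb : sect g w ∈ G := hssG g hg.1 w
  have h2 : sect g w * (sect k (g.toPerm v) * (sect k (g.toPerm w))⁻¹) * (sect g w)⁻¹ ∈ H := by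
    have := hnormal _ (G.inv_mem hb) _ h1
    simpa using this
  have h3 : sect g v * (sect g w)⁻¹ ∈ H := hg.2 v w
  have h4 := H.mul_mem h3 h2
  convert h4 using 1
  group
  exact Iff.rfl

lemma H_subset_GH {G H : Subgroup (TreeAut d)} (hHG : H ≤ G)
    (hssH : SelfSimilarS (H : Set (TreeAut d))) :
    (H : Set (TreeAut d)) ⊆ GHset (G : Set (TreeAut d)) (H : Set (TreeAut d)) :=
  fun h hh => ⟨hHG hh, fun v w => H.mul_mem (hssH h hh v) (H.inv_mem (hssH h hh w))⟩

lemma GH_selfsim {G H : Subgroup (TreeAut d)}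
    (hssG : SelfSimilarS (G : Set (TreeAut d))) :
    SelfSimilarS (GHset (G : Set (TreeAut d)) (H : Set (TreeAut d))) :=
  fun g hg u => ⟨hssG g hg.1 u, fun v w => by rw [sect_sect, sect_sect]; exact hg.2 _ _⟩

lemma GH_lift {G H : Subgroup (TreeAut d)} (hHG : H ≤ G)
    (hnormal : ∀ g ∈ G, ∀ h ∈ H, g⁻¹ * h * g ∈ H)
    (hssH : SelfSimilarS (H : Set (TreeAut d)))
    (hssG : SelfSimilarS (G : Set (TreeAut d)))
    (hfracH : FractalS (H : Set (TreeAut d))) :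
    ∀ (v : List (Fin d)) (x : TreeAut d),
      x ∈ GHset (G : Set (TreeAut d)) (H : Set (TreeAut d)) →
      ∃ g ∈ GHset (G : Set (TreeAut d)) (H : Set (TreeAut d)),
        g.toPerm v = v ∧ sect g v = x := by
  intro v
  induction v with
  | nil => exact fun x hx => ⟨x, hx, toPerm_nil x, sect_root x⟩
  | cons i u ih =>
    intro x hx
    obtain ⟨y, hy, hyfix, hysect⟩ := ih x hx
    obtain ⟨h, hh, hhmap⟩ := hfracH.2.1 (y.toPerm [i]) [i] (y.length_eq [i])
    set g₀ := y * h with hg₀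
    have hg₀GH : g₀ ∈ GHset (G : Set (TreeAut d)) (H : Set (TreeAut d)) :=
      GH_mul hnormal hssG hy (H_subset_GH hHG hssH hh)
    have hg₀i : g₀.toPerm [i] = [i] := hhmap
    set z := sect g₀ [i] with hz
    have hz1 : z * g₀⁻¹ ∈ H := by
      have := hg₀GH.2 [i] []
      rwa [sect_root] at this
    have hyh : g₀ * y⁻¹ ∈ H := by
      have := hnormal y⁻¹ (G.inv_mem hy.1) h hh
      have e : (y⁻¹)⁻¹ * h * y⁻¹ = g₀ * y⁻¹ := by rw [hg₀]; group
      rwa [e] at this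
    have hzy : y * z⁻¹ ∈ H := by
      have h5 := H.mul_mem hz1 hyh
      have h6 : z * y⁻¹ ∈ H := by
        convert h5 using 1
        group
      have h7 := H.inv_mem h6
      simpa using h7
    have hvs : y * z⁻¹ ∈ vertexSections (H : Set (TreeAut d)) [i] := by
      rw [hfracH.2.2 [i]]; exact hzy
    obtain ⟨h₁, hh₁, hh₁fix, hh₁sect⟩ := hvs
    set g := h₁ * g₀ with hgdef
    have hgGH : g ∈ GHset (G : Set (TreeAut d)) (H : Set (TreeAut d)) :=
      GH_mul hnormal hssG (H_subset_GH hHG hssH hh₁) hg₀GH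
    have hgi : g.toPerm [i] = [i] := by
      show g₀.toPerm (h₁.toPerm [i]) = [i]
      rw [hh₁fix, hg₀i]
    have hgsect : sect g [i] = y := by
      rw [hgdef, sect_mul, hh₁fix, hh₁sect, ← hz, inv_mul_cancel_right]
    have hiu : (i :: u) = [i] ++ u := rfl
    have hfix : g.toPerm (i :: u) = i :: u := by
      rw [hiu, apply_append g [i] u]
      have : (g.toPerm ([i] ++ u)).drop ([i] : List (Fin d)).length
          = (sect g [i]).toPerm u := rfl
      rw [this, hgsect, hyfix, hgi]
    refine ⟨g, hgGH, hfix, ?_⟩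
    rw [hiu, ← sect_sect, hgsect, hysect]

end AuxGH

/-- Let `d ≥ 2`, let `T` be the `d`-adic rooted tree, and let
`1 ≠ H ⊴ G ≤ Aut T` be self-similar subgroups with `H` fractal.  Then the subgroup
`G_H := {g ∈ G : (g|_v)(g|_w)⁻¹ ∈ H for all vertices v, w of T}` is fractal. -/
theorem GH_fractal
    {d : ℕ} (hd : 2 ≤ d) (G H : Subgroup (TreeAut d))
    (hH_ne : H ≠ ⊥) (hHG : H ≤ G)
    (hnormal : ∀ g ∈ G, ∀ h ∈ H, g⁻¹ * h * g ∈ H)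
    (hssH : SelfSimilarS (H : Set (TreeAut d)))
    (hssG : SelfSimilarS (G : Set (TreeAut d)))
    (hfracH : FractalS (H : Set (TreeAut d))) :
    FractalS (GHset (G : Set (TreeAut d)) (H : Set (TreeAut d))) := by
  refine ⟨GH_selfsim hssG, ?_, ?_⟩
  · intro v w hl
    obtain ⟨h, hh, hmap⟩ := hfracH.2.1 v w hl
    exact ⟨h, H_subset_GH hHG hssH hh, hmap⟩
  · intro v
    apply Set.ext
    intro x
    constructor
    · rintro ⟨g, hg, hfix, rfl⟩
      exact GH_selfsim hssG g hg v
    · intro hx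
      obtain ⟨g, hg, hfix, hsect⟩ := GH_lift hHG hnormal hssH hssG hfracH v x hx
      exact ⟨g, hg, hfix, hsect⟩

end ArboGal
end

section
/- Let d ≥ 2, let T be the d-adic rooted tree, and let 1 ≠ H ⊴ G ≤ Aut T be self-similar subgroups, where H is closed, level-transitive and of finite type of depth D. Then St_{G_H}(D) ≤ H, i.e., every element of G_H that fixes level D pointwise belongs to H. -/
/-!
Common framework: automorphisms of the `d`-adic rooted tree.

Vertices of the `d`-adic rooted tree `T` are finite words over the alphabet `Fin d`
(the root is the empty word `[]`, and the immediate descendants of `v` are the words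
`v ++ [i]`).  An automorphism of `T` is a permutation of the vertex set preserving
the length (= level) of words and the prefix (= ancestor) relation.
-/

namespace ArboGal

open TreeAut

open TreeAut

/-- Let `d ≥ 2`, let `T` be the `d`-adic rooted tree, and let
`1 ≠ H ⊴ G ≤ Aut T` be self-similar subgroups, where `H` is closed, level-transitive and of
finite type of depth `D`.  Then `St_{G_H}(D) ≤ H`, i.e. every element of `G_H` that fixes
level `D` pointwise belongs to `H`. -/
theorem GH_levelStabilizer_le
    {d : ℕ} (hd : 2 ≤ d) (G H : Subgroup (TreeAut d))
    (hH_ne : H ≠ ⊥) (hHG : H ≤ G)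
    (hnormal : ∀ g ∈ G, ∀ h ∈ H, g⁻¹ * h * g ∈ H)
    (hssH : SelfSimilarS (H : Set (TreeAut d)))
    (hssG : SelfSimilarS (G : Set (TreeAut d)))
    (hclH : CongrClosedS (H : Set (TreeAut d)))
    (hltH : LevelTrans (H : Set (TreeAut d)))
    (D : ℕ) (hD : 1 ≤ D) (hft : FiniteType (H : Set (TreeAut d)) D) :
    ∀ g ∈ GHset (G : Set (TreeAut d)) (H : Set (TreeAut d)),
      (∀ v : List (Fin d), v.length = D → g.toPerm v = v) → g ∈ H := by
  intro g hg hfix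
  have hsect0 : sect g ([] : List (Fin d)) = g := by
    apply toPerm_injective
    apply Equiv.ext
    intro w
    simp [sect_apply]
  show g ∈ (H : Set (TreeAut d))
  rw [hft]
  intro v
  have hh : sect g v * g⁻¹ ∈ H := by
    have h2 := hg.2 v []
    rwa [hsect0] at h2
  refine ⟨sect g v * g⁻¹, hh, ?_⟩
  funext w
  apply Subtype.ext
  show (sect g v * g⁻¹).toPerm w.1 = (sect g v).toPerm w.1
  have hx : g.toPerm ((sect g v).toPerm w.1) = (sect g v).toPerm w.1 :=
    hfix _ (by rw [(sect g v).length_eq, w.2])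
  show g.toPerm.symm ((sect g v).toPerm w.1) = (sect g v).toPerm w.1
  apply g.toPerm.injective
  rw [Equiv.apply_symm_apply, hx]

end ArboGal
end
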